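/- arXiv:1007.0155 — 3 statements merged into one kernel-verified Lean document; each statement's English description precedes it below -/
import Mathlib

section
/- Let X be a Lévy process. Then for every Δ > 0, every x ∈ ℝ and every x₀ > 0, the following inequality holds: P(Δ·sup_{t≥0} X_t > x) · P(Δ·inf_{t∈[0,1]} X_t > −x₀) ≤ P(Δ·sup_{n∈ℕ} X_n > x − x₀), where the supremum over n ∈ ℕ is taken over integer time points (including n = 0, with X_0 = 0). -/
open MeasureTheory ProbabilityTheory Filter Topology Set

noncomputable section

/-- The sigma-algebra generated by the process `X` up to time `t`. -/
def pastSigma {Ω : Type*} [MeasureSpace Ω] (X : ℝ → Ω → ℝ) (t : ℝ) : MeasurableSpace Ω :=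
  ⨆ u ∈ Set.Icc (0:ℝ) t, MeasurableSpace.comap (X u) inferInstance

/-- A real-valued Lévy process: starts at `0`, has càdlàg sample paths, and has
stationary increments that are independent of the past. -/
structure IsLevyProcess {Ω : Type*} [MeasureSpace Ω] (X : ℝ → Ω → ℝ) : Prop where
  meas : ∀ t : ℝ, Measurable (X t)
  init : ∀ ω, X 0 ω = 0
  rightCont : ∀ ω, ∀ t : ℝ, 0 ≤ t → ContinuousWithinAt (fun u => X u ω) (Set.Ici t) t
  leftLim : ∀ ω, ∀ t : ℝ, 0 < t → ∃ l, Tendsto (fun u => X u ω) (𝓝[<] t) (𝓝 l)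
  indepIncr : ∀ t s : ℝ, 0 ≤ t → t < s →
    Indep (MeasurableSpace.comap (fun ω => X s ω - X t ω) inferInstance) (pastSigma X t) ℙ
  statIncr : ∀ t s : ℝ, 0 ≤ t → t < s →
    Measure.map (fun ω => X s ω - X t ω) ℙ = Measure.map (X (s - t)) ℙ

/-- Convergence in distribution of the family `V a` to `R` along the filter `l`:
convergence of the distribution functions at every continuity point of the
distribution function of `R`. -/
def TendstoInDistrib {Ω Ω' : Type*} [MeasureSpace Ω] [MeasureSpace Ω']
    (l : Filter ℝ) (V : ℝ → Ω → ℝ) (R : Ω' → ℝ) : Prop :=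
  ∀ x : ℝ, ContinuousAt (fun y => (ℙ {ω' | R ω' ≤ y}).toReal) x →
    Tendsto (fun a => (ℙ {ω | V a ω ≤ x}).toReal) l (𝓝 ((ℙ {ω' | R ω' ≤ x}).toReal))


/-! Discretize time on the dyadic grid of mesh `2⁻ᴺ`. At the first grid time `τ` with `X τ > c`,
the increment `X (⌊τ⌋ + 1) - X τ` spans a time in `(0, 1]`, is independent of the past, and
exceeds `b` with probability at least `β = P(inf_{[0,1]} X > b)`; on that event `X` exceeds
`c + b` at the integer time `⌊τ⌋ + 1`. Summing over the values of `τ` and letting `N → ∞`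
(right-continuity) gives `P(∃ t, X t > c) * β ≤ P(∃ n, X n > c + b)`.
Since a real `⨆` of an unbounded family is `0`, the suprema in the statement also require
boundedness of `n ↦ X n`; this is a tail event of the independent unit increments, so it has
probability `0` or `1` by Kolmogorov's zero-one law. -/
open scoped ENNReal

lemma bddBelow_image_Icc_of_cadlag {f : ℝ → ℝ} {a b : ℝ}
    (hright : ∀ t ∈ Icc a b, ContinuousWithinAt f (Ici t) t)
    (hleft : ∀ t ∈ Ioc a b, ∃ l, Tendsto f (𝓝[<] t) (𝓝 l)) :
    BddBelow (f '' Icc a b) := by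
  refine isCompact_Icc.induction_on (p := fun s => BddBelow (f '' s)) (by simp)
    (fun s t hst ht => ht.mono (image_mono hst))
    (fun s t hs ht => by simpa only [image_union] using hs.union ht) fun t ht => ?_
  have hge : ∀ᶠ u in 𝓝[≥] t, f t - 1 ≤ f u := hright t ht (Ici_mem_nhds (sub_one_lt _))
  obtain ⟨C, hC⟩ : ∃ C, ∀ᶠ u in 𝓝[Icc a b] t, C ≤ f u := by
    rcases ht.1.eq_or_lt with rfl | hat
    · exact ⟨_, nhdsWithin_mono _ Icc_subset_Ici_self hge⟩
    · obtain ⟨l, hl⟩ := hleft t ⟨hat, ht.2⟩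
      have hlt : ∀ᶠ u in 𝓝[<] t, l - 1 ≤ f u := hl (Ici_mem_nhds (sub_one_lt _))
      refine ⟨min (l - 1) (f t - 1), nhdsWithin_le_nhds ?_⟩
      rw [← nhdsLT_sup_nhdsGE]
      exact eventually_sup.2
        ⟨hlt.mono fun u hu => min_le_of_left_le hu, hge.mono fun u hu => min_le_of_right_le hu⟩
  exact ⟨{u | C ≤ f u}, hC, C, forall_mem_image.2 fun u hu => hu⟩

lemma exists_dyadic_mem_of_continuousWithinAt_Ici {f : ℝ → ℝ} {u : ℝ} {s : Set ℝ}
    (hf : ContinuousWithinAt f (Ici u) u) (hu : 0 ≤ u) (hs : s ∈ 𝓝 (f u)) :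
    ∃ N k : ℕ, f (k / 2 ^ N) ∈ s := by
  have hdyadic : Tendsto (fun N : ℕ => (⌈u * 2 ^ N⌉₊ : ℝ) / 2 ^ N) atTop (𝓝[≥] u) := by
    refine tendsto_nhdsWithin_iff.2 ⟨?_, Eventually.of_forall fun N => ?_⟩
    · have hlim : Tendsto (fun N : ℕ => u + (1 / 2) ^ N) atTop (𝓝 u) := by
        simpa using (tendsto_pow_atTop_nhds_zero_of_lt_one (r := (1 / 2 : ℝ))
          (by norm_num) (by norm_num)).const_add u
      refine tendsto_of_tendsto_of_tendsto_of_le_of_le tendsto_const_nhds hlim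
        (fun N => ?_) fun N => ?_
      · exact (le_div_iff₀ (by positivity)).2 (Nat.le_ceil _)
      · rw [div_le_iff₀ (by positivity), add_mul, one_div_pow, one_div,
          inv_mul_cancel₀ (by positivity)]
        exact (Nat.ceil_lt_add_one (by positivity)).le
    · exact mem_Ici.2 ((le_div_iff₀ (by positivity)).2 (Nat.le_ceil _))
  obtain ⟨N, hN⟩ := (hdyadic.eventually (hf hs)).exists
  exact ⟨N, _, hN⟩

lemma Real.bddAbove_range_of_iSup_pos {ι : Sort*} {f : ι → ℝ} (h : 0 < ⨆ i, f i) :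
    BddAbove (range f) := by
  by_contra hf
  rw [Real.iSup_of_not_bddAbove hf] at h
  exact h.false

lemma bddAbove_range_iff_bddAbove_range_sub (s : ℕ → ℝ) (k : ℕ) :
    BddAbove (range s) ↔ BddAbove (range fun n => s (k + n) - s k) := by
  constructor
  · rintro ⟨M, hM⟩
    exact ⟨M - s k, forall_mem_range.2 fun n => sub_le_sub_right (hM (mem_range_self _)) _⟩
  · rintro ⟨M, hM⟩
    refine (isBoundedUnder_of_eventually_le (a := M + s k)
      (eventually_atTop.2 ⟨k, fun n hn => ?_⟩)).bddAbove_range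
    obtain ⟨j, rfl⟩ := Nat.exists_eq_add_of_le hn
    linarith [hM (mem_range_self j)]

section Independence

variable {Ω : Type*} {mΩ : MeasurableSpace Ω} {μ : Measure Ω}

theorem iIndep_of_indep_of_le [IsProbabilityMeasure μ] {m F : ℕ → MeasurableSpace Ω}
    (hle : ∀ i n, i < n → m i ≤ F n) (hind : ∀ n, Indep (m n) (F n) μ) : iIndep m μ := by
  refine (iIndep_iff m μ).2 fun s => ?_
  induction s using Finset.induction_on_max with
  | empty => intro f _; simp
  | insert n s hlt ih =>
    intro f hf
    have hrest : MeasurableSet[F n] (⋂ i ∈ s, f i) :=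
      .biInter s.countable_toSet fun i hi =>
        hle i n (hlt i hi) _ (hf i (Finset.mem_insert_of_mem hi))
    rw [Finset.set_biInter_insert, Finset.prod_insert fun hn => (hlt n hn).false,
      (Indep_iff _ _ _).1 (hind n) _ _ (hf n (Finset.mem_insert_self n s)) hrest,
      ih fun i hi => hf i (Finset.mem_insert_of_mem hi)]

theorem measure_bddAbove_partialSums_eq_zero_or_one [IsProbabilityMeasure μ] {Y : ℕ → Ω → ℝ}
    (hY : ∀ j, Measurable (Y j)) (hind : iIndepFun Y μ) :
    μ {ω | BddAbove (range fun n => ∑ j ∈ Finset.range n, Y j ω)} = 0 ∨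
      μ {ω | BddAbove (range fun n => ∑ j ∈ Finset.range n, Y j ω)} = 1 := by
  refine measure_zero_or_one_of_measurableSet_limsup_atTop (fun j => (hY j).comap_le)
    ((iIndepFun_iff_iIndep _ _ _).1 hind) ?_
  rw [limsup_eq_iInf_iSup_of_nat, MeasurableSpace.measurableSet_iInf]
  intro k
  have hshift : {ω | BddAbove (range fun n => ∑ j ∈ Finset.range n, Y j ω)} =
      {ω | BddAbove (range fun n => ∑ j ∈ Finset.range n, Y (k + j) ω)} := by
    ext ω
    rw [mem_ofPred, mem_ofPred, bddAbove_range_iff_bddAbove_range_sub _ k]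
    simp only [Finset.sum_range_add, add_sub_cancel_left]
  rw [hshift]
  exact measurableSet_bddAbove_range fun n => Finset.measurable_sum _ fun j _ =>
    .of_comap_le (le_iSup₂ (f := fun i (_ : i ≥ k) => MeasurableSpace.comap (Y i) _) (k + j)
      (Nat.le_add_right k j))

theorem measure_iUnion_mul_le_of_indep {m mZ : ℕ → MeasurableSpace Ω} {E Z : ℕ → Set Ω}
    {β : ℝ≥0∞} (hm : ∀ k, m k ≤ mΩ) (hE : ∀ j k, j ≤ k → MeasurableSet[m k] (E j))
    (hmZ : ∀ k, mZ k ≤ mΩ) (hZ : ∀ k, MeasurableSet[mZ k] (Z k))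
    (hind : ∀ k, Indep (mZ k) (m k) μ) (hβ : ∀ k, β ≤ μ (Z k)) :
    μ (⋃ k, E k) * β ≤ μ (⋃ k, E k ∩ Z k) := by
  have hF : ∀ k, MeasurableSet[m k] (disjointed E k) := fun k => by
    rw [disjointed_eq_inter_compl]
    exact (hE k k le_rfl).inter (.iInter fun j => .iInter fun hj => (hE j k hj.le).compl)
  calc μ (⋃ k, E k) * β = ∑' k, μ (disjointed E k) * β := by
        rw [← iUnion_disjointed, measure_iUnion (disjoint_disjointed E) fun k => hm k _ (hF k),
          ENNReal.tsum_mul_right]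
    _ ≤ ∑' k, μ (Z k ∩ disjointed E k) := ENNReal.tsum_le_tsum fun k => by
        rw [(Indep_iff _ _ _).1 (hind k) _ _ (hZ k) (hF k), mul_comm]
        gcongr
        exact hβ k
    _ ≤ μ (⋃ k, Z k ∩ disjointed E k) := tsum_meas_le_meas_iUnion_of_disjoint μ
        (fun k => (hmZ k _ (hZ k)).inter (hm k _ (hF k))) fun i j hij =>
          (disjoint_disjointed E hij).mono inter_subset_right inter_subset_right
    _ ≤ μ (⋃ k, E k ∩ Z k) :=
        measure_mono (iUnion_mono fun k ω hω => ⟨disjointed_subset E k hω.2, hω.1⟩)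

end Independence

section Levy

variable {Ω : Type*} [MeasureSpace Ω] {X : ℝ → Ω → ℝ}

lemma measurable_pastSigma (X : ℝ → Ω → ℝ) {u t : ℝ} (hu : 0 ≤ u) (hut : u ≤ t) :
    Measurable[pastSigma X t] (X u) :=
  .of_comap_le (le_iSup₂ (f := fun u (_ : u ∈ Icc 0 t) => MeasurableSpace.comap (X u) _) u
    ⟨hu, hut⟩)

namespace IsLevyProcess

lemma pastSigma_le (hX : IsLevyProcess X) (t : ℝ) :
    pastSigma X t ≤ MeasureSpace.toMeasurableSpace :=
  iSup₂_le fun u _ => (hX.meas u).comap_le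

lemma measure_sub_mem (hX : IsLevyProcess X) {t s : ℝ} (ht : 0 ≤ t) (hts : t < s)
    {A : Set ℝ} (hA : MeasurableSet A) :
    ℙ {ω | X s ω - X t ω ∈ A} = ℙ {ω | X (s - t) ω ∈ A} := by
  have h := congrArg (· A) (hX.statIncr t s ht hts)
  rwa [Measure.map_apply (f := fun ω => X s ω - X t ω) ((hX.meas s).sub (hX.meas t)) hA,
    Measure.map_apply (hX.meas _) hA] at h

lemma bddBelow_Icc (hX : IsLevyProcess X) (ω : Ω) {a b : ℝ} (ha : 0 ≤ a) :
    BddBelow (range fun t : Icc a b => X t ω) := by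
  have h := bddBelow_image_Icc_of_cadlag (b := b) (fun t ht => hX.rightCont ω t (ha.trans ht.1))
    fun t ht => hX.leftLim ω t (ha.trans_lt ht.1)
  rwa [image_eq_range] at h

lemma iSup_nat_nonneg (hX : IsLevyProcess X) (ω : Ω) : 0 ≤ ⨆ n : ℕ, X n ω :=
  Real.iSup_nonneg' ⟨0, by rw [Nat.cast_zero, hX.init]⟩

lemma iIndepFun_unitIncrements [IsProbabilityMeasure (ℙ : Measure Ω)] (hX : IsLevyProcess X) :
    iIndepFun (fun (j : ℕ) ω => X (j + 1) ω - X j ω) ℙ := by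
  rw [iIndepFun_iff_iIndep]
  refine iIndep_of_indep_of_le (F := fun n : ℕ => pastSigma X n) (fun i n hin => ?_)
    fun n => hX.indepIncr n (n + 1) n.cast_nonneg (lt_add_one _)
  have hin : (i : ℝ) + 1 ≤ n := by exact_mod_cast hin
  exact ((measurable_pastSigma X (by positivity) hin).sub
    (measurable_pastSigma X i.cast_nonneg (by linarith))).comap_le

lemma measure_bddAbove_nat_eq_zero_or_one [IsProbabilityMeasure (ℙ : Measure Ω)]
    (hX : IsLevyProcess X) :
    ℙ {ω | BddAbove (range fun n : ℕ => X n ω)} = 0 ∨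
      ℙ {ω | BddAbove (range fun n : ℕ => X n ω)} = 1 := by
  have hsum : ∀ ω (n : ℕ), X n ω = ∑ j ∈ Finset.range n, (X (j + 1) ω - X j ω) := by
    intro ω n
    simpa [hX.init] using (Finset.sum_range_sub (fun j : ℕ => X j ω) n).symm
  have hset : {ω | BddAbove (range fun n : ℕ => X n ω)} =
      {ω | BddAbove (range fun n => ∑ j ∈ Finset.range n, (X (j + 1) ω - X j ω))} := by
    ext ω
    rw [mem_ofPred, mem_ofPred, funext (hsum ω)]
  rw [hset]
  exact measure_bddAbove_partialSums_eq_zero_or_one (fun j => (hX.meas _).sub (hX.meas _))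
    hX.iIndepFun_unitIncrements

lemma measure_exists_dyadic_gt_mul_le (hX : IsLevyProcess X) (c b : ℝ) {β : ℝ≥0∞}
    (hβ : ∀ s, 0 < s → s ≤ 1 → β ≤ ℙ {ω | b < X s ω}) (N : ℕ) :
    ℙ {ω | ∃ k : ℕ, c < X (k / 2 ^ N) ω} * β ≤ ℙ {ω | ∃ n : ℕ, c + b < X n ω} := by
  set t : ℕ → ℝ := fun k => k / 2 ^ N
  set n : ℕ → ℕ := fun k => ⌊t k⌋₊ + 1
  have ht0 : ∀ k, 0 ≤ t k := fun k => by positivity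
  have ht_mono : Monotone t := fun j k hjk =>
    div_le_div_of_nonneg_right (by exact_mod_cast hjk) (by positivity)
  have htn : ∀ k, t k < n k := fun k => by push_cast [n]; exact Nat.lt_floor_add_one _
  have hnt : ∀ k, (n k : ℝ) - t k ≤ 1 := fun k => by
    push_cast [n]; linarith [Nat.floor_le (ht0 k)]
  calc ℙ {ω | ∃ k : ℕ, c < X (t k) ω} * β = ℙ (⋃ k, {ω | c < X (t k) ω}) * β := by
        rw [ofPred_exists]
    _ ≤ ℙ (⋃ k, {ω | c < X (t k) ω} ∩ {ω | b < X (n k) ω - X (t k) ω}) :=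
        measure_iUnion_mul_le_of_indep (m := fun k => pastSigma X (t k))
          (mZ := fun k => MeasurableSpace.comap (fun ω => X (n k) ω - X (t k) ω) _)
          (fun k => hX.pastSigma_le _)
          (fun j k hjk => measurable_pastSigma X (ht0 j) (ht_mono hjk) measurableSet_Ioi)
          (fun k => ((hX.meas _).sub (hX.meas _)).comap_le)
          (fun k => ⟨Ioi b, measurableSet_Ioi, rfl⟩)
          (fun k => hX.indepIncr _ _ (ht0 k) (htn k)) fun k =>
            (hβ _ (sub_pos.2 (htn k)) (hnt k)).trans_eq
              (hX.measure_sub_mem (ht0 k) (htn k) measurableSet_Ioi).symm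
    _ ≤ ℙ {ω | ∃ n : ℕ, c + b < X n ω} :=
        measure_mono (iUnion_subset fun k ω ⟨(hc : c < X (t k) ω), (hb : b < _)⟩ =>
          ⟨n k, by linarith⟩)

lemma measure_exists_gt_mul_le (hX : IsLevyProcess X) (c b : ℝ) {β : ℝ≥0∞}
    (hβ : ∀ s, 0 < s → s ≤ 1 → β ≤ ℙ {ω | b < X s ω}) :
    ℙ {ω | ∃ t, 0 ≤ t ∧ c < X t ω} * β ≤ ℙ {ω | ∃ n : ℕ, c + b < X n ω} := by
  set D : ℕ → Set Ω := fun N => {ω | ∃ k : ℕ, c < X (k / 2 ^ N) ω}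
  have hD : Monotone D := monotone_nat_of_le_succ fun N ω ⟨k, hk⟩ =>
    ⟨2 * k, show c < X (((2 * k : ℕ) : ℝ) / 2 ^ (N + 1)) ω by
      rwa [show ((2 * k : ℕ) : ℝ) / 2 ^ (N + 1) = k / 2 ^ N by push_cast; ring]⟩
  have hsub : {ω | ∃ t, 0 ≤ t ∧ c < X t ω} ⊆ ⋃ N, D N := fun ω ⟨t, ht, hct⟩ =>
    mem_iUnion.2 (exists_dyadic_mem_of_continuousWithinAt_Ici (hX.rightCont ω t ht) ht
      (Ioi_mem_nhds hct))
  calc ℙ {ω | ∃ t, 0 ≤ t ∧ c < X t ω} * β ≤ ℙ (⋃ N, D N) * β := by gcongr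
    _ = ⨆ N, ℙ (D N) * β := by rw [hD.measure_iUnion, ENNReal.iSup_mul]
    _ ≤ ℙ {ω | ∃ n : ℕ, c + b < X n ω} := iSup_le (hX.measure_exists_dyadic_gt_mul_le c b hβ)

end IsLevyProcess

end Levy

/-- For a Lévy process `X`, any `Δ > 0`, `x ∈ ℝ` and `x₀ > 0`:
`P(Δ sup_{t≥0} X_t > x) * P(Δ inf_{t∈[0,1]} X_t > -x₀) ≤ P(Δ sup_{n∈ℕ} X_n > x - x₀)`. -/
theorem levy_sup_inequality
    {Ω : Type*} [MeasureSpace Ω] [IsProbabilityMeasure (ℙ : Measure Ω)]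
    (X : ℝ → Ω → ℝ) (hX : IsLevyProcess X)
    (Δ : ℝ) (hΔ : 0 < Δ) (x x₀ : ℝ) (hx₀ : 0 < x₀) :
    ℙ {ω | x < Δ * ⨆ t : Set.Ici (0:ℝ), X t ω} *
      ℙ {ω | -x₀ < Δ * ⨅ t : Set.Icc (0:ℝ) 1, X t ω} ≤
    ℙ {ω | x - x₀ < Δ * ⨆ n : ℕ, X n ω} := by
  rcases lt_or_ge x x₀ with hxx | hxx
  · have hall : ∀ ω, x - x₀ < Δ * ⨆ n : ℕ, X n ω := fun ω => by
      nlinarith [hX.iSup_nat_nonneg ω]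
    simp only [hall, ofPred_true, measure_univ]
    exact mul_le_one' prob_le_one prob_le_one
  set S := {ω | BddAbove (range fun n : ℕ => X n ω)}
  have hA : {ω | x < Δ * ⨆ t : Ici (0:ℝ), X t ω} ⊆ S ∩ {ω | ∃ t, 0 ≤ t ∧ x / Δ < X t ω} := by
    intro ω (hω : x < Δ * ⨆ t : Ici (0:ℝ), X t ω)
    have hlt := (div_lt_iff₀' hΔ).2 hω
    have hbdd :=
      Real.bddAbove_range_of_iSup_pos ((div_nonneg (hx₀.le.trans hxx) hΔ.le).trans_lt hlt)
    obtain ⟨⟨t, ht⟩, hxt⟩ := exists_lt_of_lt_ciSup hlt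
    have hnat : (range fun n : ℕ => X n ω) ⊆ range fun t : Ici (0:ℝ) => X t ω :=
      range_subset_iff.2 fun n => ⟨⟨n, mem_Ici.2 n.cast_nonneg⟩, rfl⟩
    exact ⟨hbdd.mono hnat, t, ht, hxt⟩
  have hB : ∀ s, 0 < s → s ≤ 1 → ℙ {ω | -x₀ < Δ * ⨅ t : Icc (0:ℝ) 1, X t ω} ≤
      ℙ {ω | -x₀ / Δ < X s ω} := fun s hs hs1 => measure_mono fun ω hω =>
    ((div_lt_iff₀' hΔ).2 hω).trans_le (ciInf_le (hX.bddBelow_Icc ω le_rfl) ⟨s, hs.le, hs1⟩)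
  have hC : {ω | ∃ n : ℕ, x / Δ + -x₀ / Δ < X n ω} ∩ S ⊆ {ω | x - x₀ < Δ * ⨆ n : ℕ, X n ω} :=
    fun ω ⟨⟨n, hn⟩, hbdd⟩ => by
      rw [mem_ofPred, ← div_lt_iff₀' hΔ, sub_div, sub_eq_add_neg, ← neg_div]
      exact hn.trans_le (le_ciSup hbdd n)
  rcases hX.measure_bddAbove_nat_eq_zero_or_one with hS | hS
  · rw [measure_mono_null (hA.trans inter_subset_left) hS, zero_mul]
    exact zero_le
  calc _ ≤ ℙ {ω | ∃ t, 0 ≤ t ∧ x / Δ < X t ω} * ℙ {ω | -x₀ < Δ * ⨅ t : Icc (0:ℝ) 1, X t ω} :=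
        mul_le_mul_left (measure_mono (hA.trans inter_subset_right)) _
    _ ≤ ℙ {ω | ∃ n : ℕ, x / Δ + -x₀ / Δ < X n ω} := hX.measure_exists_gt_mul_le _ _ hB
    _ = ℙ ({ω | ∃ n : ℕ, x / Δ + -x₀ / Δ < X n ω} ∩ S) := (measure_inter_conull
        ((prob_compl_eq_zero_iff (measurableSet_bddAbove_range fun n : ℕ => hX.meas n)).2 hS)).symm
    _ ≤ _ := measure_mono hC
end
end

section
/- For each a > 0, let X^{(a)} be a Lévy process and let Δ : (0,∞) → (0,∞). If Δ(a)·X_1^{(a)} → 0 almost surely as a ↓ 0, then Δ(a)·inf_{t∈[0,1]} X_t^{(a)} → 0 in probability as a ↓ 0, i.e. for every ε > 0, P(|Δ(a)·inf_{t∈[0,1]} X_t^{(a)}| > ε) → 0 as a ↓ 0. -/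
open MeasureTheory ProbabilityTheory Filter Topology Set

noncomputable section

/-!
Put `Z = Δ(a) X^{(a)}`, again a Lévy process, and `p = P(|Z₁| ≥ ε/20)`, which tends to `0` since
almost sure convergence implies convergence in probability.

A first-passage (Ottaviani) decomposition over the dyadic times `j/2^k` gives
`P(min_j Z_{j/2^k} < -ε) ≤ 2 P(Z₁ < -ε/2)` as soon as `P(Z_r ≥ ε/2) ≤ 1/2` for every dyadic
`r ∈ [0,1]`, and right-continuity of the paths passes from dyadic times to the infimum over `[0,1]`.

The uniform bound on `P(Z_r ≥ ε/2)` comes from medians. Splitting `Z_{s+r}` into the independent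
summands `Z_s` and `Z_{s+r} - Z_s` (the latter distributed as `Z_r`) shows that `Z_s` lies within
`ε/10` of its median `g(s)` except with probability `2p`, and that `g` is additive up to `ε/10`.
An almost additive `g` with `|g(1)| ≤ ε/20` satisfies `|g| ≤ 2ε/5` on the dyadic points of `[0,1]`.
-/

namespace ProbabilityTheory

variable {Ω : Type*} {mΩ : MeasurableSpace Ω} {μ : Measure Ω}

theorem Indep.measureReal_le_two_mul [IsFiniteMeasure μ] {m₁ m₂ : MeasurableSpace Ω}
    (h : Indep m₁ m₂ μ) {A F G : Set Ω} (hA : MeasurableSet[m₁] A) (hF : MeasurableSet[m₂] F)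
    (hF_half : 1 / 2 ≤ μ.real F) (hAF : A ∩ F ⊆ G) : μ.real A ≤ 2 * μ.real G := by
  have h_inter : μ.real (A ∩ F) = μ.real A * μ.real F := by
    simp only [measureReal_def, (Indep_iff _ _ _).1 h A F hA hF, ENNReal.toReal_mul]
  have := mul_le_mul_of_nonneg_left hF_half (measureReal_nonneg (s := A) (μ := μ))
  linarith [measureReal_mono hAF (μ := μ)]

end ProbabilityTheory

theorem MeasureTheory.tendstoInMeasure_of_tendsto_ae_of_isCountablyGenerated
    {α ι E : Type*} {mα : MeasurableSpace α} {μ : Measure α} [IsFiniteMeasure μ]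
    [PseudoEMetricSpace E] {l : Filter ι} [l.IsCountablyGenerated] {f : ι → α → E} {g : α → E}
    (hf : ∀ᶠ i in l, AEStronglyMeasurable (f i) μ)
    (hfg : ∀ᵐ x ∂μ, Tendsto (fun i => f i x) l (𝓝 (g x))) : TendstoInMeasure μ f l g := by
  intro ε hε
  refine tendsto_of_seq_tendsto fun x hx => ?_
  obtain ⟨N, hN⟩ := eventually_atTop.1 (hx.eventually hf)
  have hx_shift : Tendsto (fun n => x (n + N)) atTop l := (tendsto_add_atTop_iff_nat N).2 hx
  exact (tendsto_add_atTop_iff_nat N).1 <| tendstoInMeasure_of_tendsto_ae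
    (fun n => hN (n + N) (Nat.le_add_left N n)) (hfg.mono fun _ h => h.comp hx_shift) ε hε

lemma tendsto_measureReal_iUnion_atTop {Ω : Type*} {mΩ : MeasurableSpace Ω} {μ : Measure Ω}
    [IsFiniteMeasure μ] {s : ℕ → Set Ω} (hs : Monotone s) :
    Tendsto (fun n => μ.real (s n)) atTop (𝓝 (μ.real (⋃ n, s n))) :=
  (ENNReal.tendsto_toReal (measure_ne_top _ _)).comp (tendsto_measure_iUnion_atTop hs)

def median (μ : Measure ℝ) : ℝ := sInf {x | 1 / 2 ≤ cdf μ x}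

section Median

variable (μ : Measure ℝ)

lemma bddBelow_half_le_cdf : BddBelow {x | 1 / 2 ≤ cdf μ x} := by
  obtain ⟨y, hy⟩ := ((tendsto_cdf_atBot μ).eventually_lt_const
    (by norm_num : (0:ℝ) < 1 / 2)).exists_forall_of_atBot
  exact ⟨y, fun x hx => le_of_not_gt fun hxy => (hy x hxy.le).not_ge hx⟩

lemma half_le_cdf_of_median_lt {x : ℝ} (hx : median μ < x) : 1 / 2 ≤ cdf μ x := by
  have h_ne : {x | 1 / 2 ≤ cdf μ x}.Nonempty :=
    ((tendsto_cdf_atTop μ).eventually_const_lt (by norm_num : (1:ℝ) / 2 < 1)).exists.imp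
      fun _ h => h.le
  obtain ⟨y, hy, hyx⟩ := exists_lt_of_csInf_lt h_ne hx
  exact hy.trans (monotone_cdf μ hyx.le)

lemma half_le_measureReal_Iic_median [IsProbabilityMeasure μ] :
    1 / 2 ≤ μ.real (Iic (median μ)) := by
  rw [← cdf_eq_real]
  exact ge_of_tendsto (((cdf μ).right_continuous _).mono Ioi_subset_Ici_self)
    (eventually_nhdsWithin_of_forall fun x hx => half_le_cdf_of_median_lt μ hx)

lemma half_le_measureReal_Ici_median [IsProbabilityMeasure μ] :
    1 / 2 ≤ μ.real (Ici (median μ)) := by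
  have h_left : Function.leftLim (cdf μ) (median μ) ≤ 1 / 2 :=
    le_of_tendsto ((monotone_cdf μ).tendsto_leftLim _) <| eventually_nhdsWithin_of_forall
      fun y (hy : y < median μ) =>
        (not_le.1 fun h => (csInf_le (bddBelow_half_le_cdf μ) h).not_gt hy).le
  have h_le_one := ((monotone_cdf μ).leftLim_le le_rfl).trans (cdf_le_one μ (median μ))
  have h_Ici := (cdf μ).measure_Ici (tendsto_cdf_atTop μ) (median μ)
  rw [measure_cdf] at h_Ici
  rw [measureReal_def, h_Ici, ENNReal.toReal_ofReal (by linarith)]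
  linarith

end Median

section MedianOfRandomVariable

variable {Ω : Type*} {mΩ : MeasurableSpace Ω} {μ : Measure Ω} {Y W V : Ω → ℝ}

lemma half_le_measureReal_le_median [IsProbabilityMeasure μ] (hY : Measurable Y) :
    1 / 2 ≤ μ.real {ω | Y ω ≤ median (μ.map Y)} := by
  have := Measure.isProbabilityMeasure_map (μ := μ) hY.aemeasurable
  have := half_le_measureReal_Iic_median (μ.map Y)
  rwa [map_measureReal_apply hY measurableSet_Iic] at this

lemma half_le_measureReal_median_le [IsProbabilityMeasure μ] (hY : Measurable Y) :
    1 / 2 ≤ μ.real {ω | median (μ.map Y) ≤ Y ω} := by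
  have := Measure.isProbabilityMeasure_map (μ := μ) hY.aemeasurable
  have := half_le_measureReal_Ici_median (μ.map Y)
  rwa [map_measureReal_apply hY measurableSet_Ici] at this

lemma lt_of_le_measureReal_le_of_measureReal_le_lt [IsFiniteMeasure μ] {q c d : ℝ}
    (hc : q ≤ μ.real {ω | c ≤ V ω}) (hd : μ.real {ω | d ≤ V ω} < q) : c < d := by
  by_contra! h
  have : μ.real {ω | c ≤ V ω} ≤ μ.real {ω | d ≤ V ω} := measureReal_mono fun ω hω => h.trans hω
  linarith

lemma lt_of_le_measureReal_le_of_measureReal_lt_le [IsFiniteMeasure μ] {q c d : ℝ}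
    (hc : q ≤ μ.real {ω | V ω ≤ c}) (hd : μ.real {ω | V ω ≤ d} < q) : d < c := by
  by_contra! h
  have : μ.real {ω | V ω ≤ c} ≤ μ.real {ω | V ω ≤ d} := measureReal_mono fun ω hω => hω.trans h
  linarith

lemma measureReal_le_le_measureReal_le_abs [IsFiniteMeasure μ] {x y : ℝ} (h : y ≤ x) :
    μ.real {ω | x ≤ V ω} ≤ μ.real {ω | y ≤ |V ω|} :=
  measureReal_mono fun _ hω => Set.mem_ofPred.2 <| h.trans <| hω.trans (le_abs_self _)

lemma measureReal_le_le_measureReal_le_abs' [IsFiniteMeasure μ] {x y : ℝ} (h : x ≤ -y) :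
    μ.real {ω | V ω ≤ x} ≤ μ.real {ω | y ≤ |V ω|} :=
  measureReal_mono fun _ hω => Set.mem_ofPred.2 <| le_neg.1 (hω.trans h) |>.trans (neg_le_abs _)

namespace ProbabilityTheory.IndepFun

theorem measureReal_le_le_two_mul [IsProbabilityMeasure μ] (h : IndepFun Y W μ)
    (hW : Measurable W) (x : ℝ) :
    μ.real {ω | x ≤ Y ω} ≤ 2 * μ.real {ω | x + median (μ.map W) ≤ Y ω + W ω} :=
  ((IndepFun_iff_Indep _ _ _).1 h).measureReal_le_two_mul
    (comap_measurable Y measurableSet_Ici) (comap_measurable W measurableSet_Ici)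
    (half_le_measureReal_median_le hW) fun _ hω => Set.mem_ofPred.2 (add_le_add hω.1 hω.2)

theorem measureReal_le_le_two_mul' [IsProbabilityMeasure μ] (h : IndepFun Y W μ)
    (hW : Measurable W) (x : ℝ) :
    μ.real {ω | Y ω ≤ x} ≤ 2 * μ.real {ω | Y ω + W ω ≤ x + median (μ.map W)} :=
  ((IndepFun_iff_Indep _ _ _).1 h).measureReal_le_two_mul
    (comap_measurable Y measurableSet_Iic) (comap_measurable W measurableSet_Iic)
    (half_le_measureReal_le_median hW) fun _ hω => Set.mem_ofPred.2 (add_le_add hω.1 hω.2)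

end ProbabilityTheory.IndepFun

end MedianOfRandomVariable

lemma abs_dyadic_le_of_abs_add_sub_le {g : ℝ → ℝ} {u v : ℝ}
    (hg : ∀ s r, 0 ≤ s → 0 ≤ r → s + r ≤ 1 → |g (s + r) - g s - g r| ≤ u) (hg1 : |g 1| ≤ v)
    (k : ℕ) {j : ℕ} (hj : j ≤ 2 ^ k) : |g (j / 2 ^ k)| ≤ 3 * u + 2 * v := by
  have hu : |g 0| ≤ u := by simpa [abs_neg] using hg 0 0 le_rfl le_rfl (by norm_num)
  have hv : 0 ≤ v := (abs_nonneg _).trans hg1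
  induction k generalizing j with
  | zero =>
    interval_cases j
    · simp only [CharP.cast_eq_zero, zero_div]; linarith [abs_nonneg (g 0)]
    · simp only [Nat.cast_one, pow_zero, div_one]; linarith [abs_nonneg (g 0)]
  | succ k ih =>
    have h_half {i : ℕ} (hi : i ≤ 2 ^ k) : |g (i / 2 ^ (k + 1))| ≤ (3 * u + 2 * v + u) / 2 := by
      have h_double : (i : ℝ) / 2 ^ (k + 1) + i / 2 ^ (k + 1) = i / 2 ^ k := by ring
      have h_sum := hg (i / 2 ^ (k + 1)) (i / 2 ^ (k + 1)) (by positivity) (by positivity)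
        (by rw [h_double]; exact div_le_one_of_le₀ (by exact_mod_cast hi) (by positivity))
      rw [h_double] at h_sum
      have := ih hi
      rw [abs_le] at h_sum this ⊢
      constructor <;> linarith
    rcases le_or_gt j (2 ^ k) with hjk | hjk
    · linarith [h_half hjk, abs_nonneg (g 0)]
    · have h_compl : (j : ℝ) / 2 ^ (k + 1) + ↑(2 ^ (k + 1) - j) / 2 ^ (k + 1) = 1 := by
        rw [Nat.cast_sub hj]; push_cast; field_simp; ring
      have h_sum := hg (j / 2 ^ (k + 1)) (↑(2 ^ (k + 1) - j) / 2 ^ (k + 1)) (by positivity)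
        (by positivity) h_compl.le
      rw [h_compl] at h_sum
      have := h_half (i := 2 ^ (k + 1) - j) (by rw [pow_succ]; omega)
      rw [abs_le] at h_sum this hg1 ⊢
      constructor <;> linarith

lemma tendsto_ceil_mul_two_pow_div {t : ℝ} (ht : 0 ≤ t) :
    Tendsto (fun k : ℕ => (⌈t * 2 ^ k⌉₊ : ℝ) / 2 ^ k) atTop (𝓝[≥] t) := by
  have h_ge (k : ℕ) : t ≤ (⌈t * 2 ^ k⌉₊ : ℝ) / 2 ^ k :=
    (le_div_iff₀ (by positivity)).2 (Nat.le_ceil _)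
  have h_le (k : ℕ) : (⌈t * 2 ^ k⌉₊ : ℝ) / 2 ^ k ≤ t + (1 / 2) ^ k := by
    rw [div_le_iff₀ (by positivity), add_mul, div_pow, one_pow, div_mul_cancel₀ _ (by positivity)]
    exact (Nat.ceil_lt_add_one (by positivity)).le
  refine tendsto_nhdsWithin_iff.2 ⟨tendsto_of_tendsto_of_tendsto_of_le_of_le tendsto_const_nhds
    ?_ h_ge h_le, Eventually.of_forall h_ge⟩
  simpa using (tendsto_pow_atTop_nhds_zero_of_lt_one (by norm_num : (0:ℝ) ≤ 1 / 2)
    (by norm_num)).const_add t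

lemma exists_dyadic_lt_of_iInf_lt {f : ℝ → ℝ}
    (hf : ∀ t ∈ Icc (0:ℝ) 1, ContinuousWithinAt f (Ici t) t) {c : ℝ}
    (h : ⨅ t : Icc (0:ℝ) 1, f t < c) : ∃ k j : ℕ, j ≤ 2 ^ k ∧ f (j / 2 ^ k) < c := by
  obtain ⟨⟨t, ht⟩, hft⟩ := exists_lt_of_ciInf_lt h
  obtain ⟨k, hk⟩ := (((hf t ht).tendsto.comp (tendsto_ceil_mul_two_pow_div ht.1)).eventually
    (gt_mem_nhds hft)).exists
  refine ⟨k, ⌈t * 2 ^ k⌉₊, ?_, hk⟩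
  rw [Nat.ceil_le]
  push_cast
  nlinarith [ht.2, pow_pos (two_pos : (0:ℝ) < 2) k]

lemma measurable_pastSigma_s4 {Ω : Type*} [MeasureSpace Ω] {Z : ℝ → Ω → ℝ} {s t : ℝ}
    (hs : s ∈ Icc 0 t) : Measurable[pastSigma Z t] (Z s) :=
  Measurable.of_comap_le <|
    le_iSup₂ (f := fun s (_ : s ∈ Icc (0:ℝ) t) => MeasurableSpace.comap (Z s) inferInstance) s hs

namespace IsLevyProcess

variable {Ω : Type*} [MeasureSpace Ω] {Z : ℝ → Ω → ℝ} {s t : ℝ}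

lemma pastSigma_le_s4 (hZ : IsLevyProcess Z) (t : ℝ) :
    pastSigma Z t ≤ (inferInstance : MeasurableSpace Ω) :=
  iSup₂_le fun s _ => (hZ.meas s).comap_le

lemma indep_incr [IsProbabilityMeasure (ℙ : Measure Ω)] (hZ : IsLevyProcess Z) (ht : 0 ≤ t)
    (hts : t ≤ s) :
    Indep (MeasurableSpace.comap (fun ω => Z s ω - Z t ω) inferInstance) (pastSigma Z t) ℙ := by
  rcases hts.lt_or_eq with hts | rfl
  · exact hZ.indepIncr t s ht hts
  · simpa only [sub_self, MeasurableSpace.comap_const] using indep_bot_left _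

lemma map_incr (hZ : IsLevyProcess Z) (ht : 0 ≤ t) (hts : t ≤ s) :
    (ℙ).map (fun ω => Z s ω - Z t ω) = (ℙ).map (Z (s - t)) := by
  rcases hts.lt_or_eq with hts | rfl
  · exact hZ.statIncr t s ht hts
  · simp only [sub_self, funext hZ.init]

lemma indepFun_incr [IsProbabilityMeasure (ℙ : Measure Ω)] (hZ : IsLevyProcess Z) (ht : 0 ≤ t)
    (hts : t ≤ s) : IndepFun (Z t) (fun ω => Z s ω - Z t ω) ℙ :=
  (IndepFun_iff_Indep _ _ _).2 <| indep_of_indep_of_le_left (hZ.indep_incr ht hts).symm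
    (measurable_pastSigma_s4 ⟨ht, le_rfl⟩).comap_le

lemma measurable_incr (hZ : IsLevyProcess Z) (s t : ℝ) : Measurable fun ω => Z s ω - Z t ω :=
  (hZ.meas s).sub (hZ.meas t)

lemma const_mul (hZ : IsLevyProcess Z) (c : ℝ) : IsLevyProcess fun t ω => c * Z t ω where
  meas t := (hZ.meas t).const_mul c
  init ω := by simp [hZ.init ω]
  rightCont ω t ht :=
    (continuous_const_mul c).continuousAt.comp_continuousWithinAt (hZ.rightCont ω t ht)
  leftLim ω t ht := let ⟨l, hl⟩ := hZ.leftLim ω t ht; ⟨c * l, hl.const_mul c⟩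
  indepIncr t s ht hts := by
    have comap_const_mul_le (f : Ω → ℝ) :
        MeasurableSpace.comap (fun ω => c * f ω) inferInstance
          ≤ MeasurableSpace.comap f inferInstance :=
      ((measurable_const_mul c).comp (comap_measurable f)).comap_le
    refine indep_of_indep_of_le_right (indep_of_indep_of_le_left (hZ.indepIncr t s ht hts) ?_)
      (iSup₂_mono fun u _ => comap_const_mul_le (Z u))
    simpa only [← mul_sub] using comap_const_mul_le fun ω => Z s ω - Z t ω
  statIncr t s ht hts := by
    have h_map (f : Ω → ℝ) (hf : Measurable f) :
        (ℙ).map (fun ω => c * f ω) = ((ℙ).map f).map (c * ·) :=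
      (Measure.map_map (measurable_const_mul c) hf).symm
    simp only [← mul_sub]
    rw [h_map _ (hZ.measurable_incr s t), h_map _ (hZ.meas _), hZ.statIncr t s ht hts]

-- An unbounded-below path has `⨅ = 0` by convention, so this needs no boundedness.
lemma iInf_nonpos (hZ : IsLevyProcess Z) (ω : Ω) : ⨅ t : Icc (0:ℝ) 1, Z t ω ≤ 0 := by
  by_cases hbdd : BddBelow (range fun t : Icc (0:ℝ) 1 => Z t ω)
  · exact ciInf_le_of_le hbdd ⟨0, left_mem_Icc.2 zero_le_one⟩ (hZ.init ω).le
  · exact (Real.iInf_of_not_bddBelow hbdd).le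

end IsLevyProcess

namespace IsLevyProcess

variable {Ω : Type*} [MeasureSpace Ω] [IsProbabilityMeasure (ℙ : Measure Ω)] {Z : ℝ → Ω → ℝ}
  {u s r : ℝ}

lemma abs_median_one_le (hZ : IsLevyProcess Z) (hp : (ℙ).real {ω | u / 2 ≤ |Z 1 ω|} < 1 / 2) :
    |median ((ℙ).map (Z 1))| ≤ u / 2 := by
  have h_up := measureReal_le_le_measureReal_le_abs (μ := ℙ) (V := Z 1) (le_refl (u / 2))
  have h_dn := measureReal_le_le_measureReal_le_abs' (μ := ℙ) (V := Z 1) (le_refl (-(u / 2)))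
  rw [abs_le]
  exact ⟨(lt_of_le_measureReal_le_of_measureReal_lt_le
      (half_le_measureReal_le_median (hZ.meas 1)) (by linarith)).le,
    (lt_of_le_measureReal_le_of_measureReal_le_lt
      (half_le_measureReal_median_le (hZ.meas 1)) (by linarith)).le⟩

lemma measureReal_median_tail_le (hZ : IsLevyProcess Z)
    (hp : (ℙ).real {ω | u / 2 ≤ |Z 1 ω|} < 1 / 4) (hs0 : 0 ≤ s) (hs1 : s ≤ 1) :
    (ℙ).real {ω | median ((ℙ).map (Z s)) + u ≤ Z s ω} ≤ 2 * (ℙ).real {ω | u / 2 ≤ |Z 1 ω|} ∧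
    (ℙ).real {ω | Z s ω ≤ median ((ℙ).map (Z s)) - u} ≤ 2 * (ℙ).real {ω | u / 2 ≤ |Z 1 ω|} := by
  have h_up := (hZ.indepFun_incr hs0 hs1).measureReal_le_le_two_mul (hZ.measurable_incr 1 s)
  have h_dn := (hZ.indepFun_incr hs0 hs1).measureReal_le_le_two_mul' (hZ.measurable_incr 1 s)
  simp only [add_sub_cancel] at h_up h_dn
  set a := median ((ℙ).map (Z s))
  set m := median ((ℙ).map fun ω => Z 1 ω - Z s ω)
  have h_abs_up (x : ℝ) (hx : u / 2 ≤ x) :=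
    measureReal_le_le_measureReal_le_abs (μ := ℙ) (V := Z 1) hx
  have h_abs_dn (x : ℝ) (hx : x ≤ -(u / 2)) :=
    measureReal_le_le_measureReal_le_abs' (μ := ℙ) (V := Z 1) hx
  have hm_up : a + m < u / 2 :=
    lt_of_le_measureReal_le_of_measureReal_le_lt (μ := ℙ) (V := Z 1) (q := 1 / 4)
    (by linarith [h_up a, half_le_measureReal_median_le (μ := ℙ) (hZ.meas s)])
    (by linarith [h_abs_up (u / 2) le_rfl])
  have hm_dn : -(u / 2) < a + m :=
    lt_of_le_measureReal_le_of_measureReal_lt_le (μ := ℙ) (V := Z 1) (q := 1 / 4)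
    (by linarith [h_dn a, half_le_measureReal_le_median (μ := ℙ) (hZ.meas s)])
    (by linarith [h_abs_dn (-(u / 2)) le_rfl])
  exact ⟨by linarith [h_up (a + u), h_abs_up (a + u + m) (by linarith)],
    by linarith [h_dn (a - u), h_abs_dn (a - u + m) (by linarith)]⟩

lemma abs_median_add_sub_le (hZ : IsLevyProcess Z)
    (hp : (ℙ).real {ω | u / 2 ≤ |Z 1 ω|} < 1 / 8) (hs : 0 ≤ s) (hr : 0 ≤ r) (hsr : s + r ≤ 1) :
    |median ((ℙ).map (Z (s + r))) - median ((ℙ).map (Z s)) - median ((ℙ).map (Z r))| ≤ u := by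
  have hs_le : s ≤ s + r := le_add_of_nonneg_right hr
  have h_med : median ((ℙ).map fun ω => Z (s + r) ω - Z s ω) = median ((ℙ).map (Z r)) := by
    rw [hZ.map_incr hs hs_le, add_sub_cancel_left]
  have h_up := (hZ.indepFun_incr hs hs_le).measureReal_le_le_two_mul
    (hZ.measurable_incr (s + r) s) (median ((ℙ).map (Z s)))
  have h_dn := (hZ.indepFun_incr hs hs_le).measureReal_le_le_two_mul'
    (hZ.measurable_incr (s + r) s) (median ((ℙ).map (Z s)))
  simp only [add_sub_cancel, h_med] at h_up h_dn
  obtain ⟨h_tail_up, h_tail_dn⟩ :=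
    hZ.measureReal_median_tail_le (u := u) (by linarith) (add_nonneg hs hr) hsr
  have h_half_up := half_le_measureReal_median_le (μ := ℙ) (hZ.meas s)
  have h_half_dn := half_le_measureReal_le_median (μ := ℙ) (hZ.meas s)
  set a := median ((ℙ).map (Z s))
  set b := median ((ℙ).map (Z r))
  set c := median ((ℙ).map (Z (s + r)))
  have h_lt : a + b < c + u :=
    lt_of_le_measureReal_le_of_measureReal_le_lt (μ := ℙ) (V := Z (s + r)) (q := 1 / 4)
      (by linarith) (by linarith)
  have h_gt : c - u < a + b :=
    lt_of_le_measureReal_le_of_measureReal_lt_le (μ := ℙ) (V := Z (s + r)) (q := 1 / 4)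
      (by linarith) (by linarith)
  rw [abs_le]
  constructor <;> linarith

-- Ottaviani's inequality. The event that `j` is the first index with `Z (t j) < -a` lies in
-- `pastSigma Z (t j)`, so on it the increment `Z (t n) - Z (t j) < b` keeps probability `≥ 1/2`.
lemma measureReal_exists_lt_le (hZ : IsLevyProcess Z) {t : ℕ → ℝ} (ht : Monotone t)
    (ht0 : 0 ≤ t 0) {n : ℕ} {a b : ℝ}
    (h_incr : ∀ j ≤ n, 1 / 2 ≤ (ℙ).real {ω | Z (t n) ω - Z (t j) ω < b}) :
    (ℙ).real {ω | ∃ j ≤ n, Z (t j) ω < -a} ≤ 2 * (ℙ).real {ω | Z (t n) ω < b - a} := by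
  set E : ℕ → Set Ω := fun j => {ω | Z (t j) ω < -a}
  set S := {ω | Z (t n) ω < b - a}
  have hS : MeasurableSet S := (hZ.meas _) measurableSet_Iio
  have hE_past {i j : ℕ} (hij : i ≤ j) : MeasurableSet[pastSigma Z (t j)] (E i) :=
    measurable_pastSigma_s4 ⟨ht0.trans (ht i.zero_le), ht hij⟩ measurableSet_Iio
  have hD_past (j : ℕ) : MeasurableSet[pastSigma Z (t j)] (disjointed E j) := by
    rw [disjointed_eq_inter_compl]
    exact (hE_past le_rfl).inter
      (MeasurableSet.biInter (to_countable _) fun i hi => (hE_past (le_of_lt hi)).compl)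
  have hD (j : ℕ) : MeasurableSet (disjointed E j) := hZ.pastSigma_le_s4 _ _ (hD_past j)
  have h_event : {ω | ∃ j ≤ n, Z (t j) ω < -a} = ⋃ j ∈ Finset.range (n + 1), disjointed E j := by
    rw [biUnion_range_succ_disjointed, partialSups_eq_biUnion_range]
    ext
    simp [E]
  have h_first (j : ℕ) (hj : j ≤ n) :
      (ℙ).real (disjointed E j) ≤ 2 * (ℙ).real (disjointed E j ∩ S) := by
    refine (hZ.indep_incr (ht0.trans (ht j.zero_le)) (ht hj)).symm.measureReal_le_two_mul
      (hD_past j) (comap_measurable _ measurableSet_Iio) (h_incr j hj)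
      fun ω ⟨hωD, hωF⟩ => ⟨hωD, ?_⟩
    have hωE : Z (t j) ω < -a := disjointed_subset E j hωD
    have hωF : Z (t n) ω - Z (t j) ω < b := hωF
    show Z (t n) ω < b - a
    linarith
  calc (ℙ).real {ω | ∃ j ≤ n, Z (t j) ω < -a}
      = ∑ j ∈ Finset.range (n + 1), (ℙ).real (disjointed E j) := by
        rw [h_event, measureReal_biUnion_finset (fun i _ j _ hij => disjoint_disjointed E hij)
          fun j _ => hD j]
    _ ≤ ∑ j ∈ Finset.range (n + 1), 2 * (ℙ).real (disjointed E j ∩ S) :=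
        Finset.sum_le_sum fun j hj => h_first j (Nat.lt_succ_iff.1 (Finset.mem_range.1 hj))
    _ = 2 * (ℙ).real (⋃ j ∈ Finset.range (n + 1), disjointed E j ∩ S) := by
        rw [← Finset.mul_sum, measureReal_biUnion_finset
          (fun i _ j _ hij => (disjoint_disjointed E hij).mono inter_subset_left inter_subset_left)
          fun j _ => (hD j).inter hS]
    _ ≤ 2 * (ℙ).real S :=
        mul_le_mul_of_nonneg_left (measureReal_mono (iUnion₂_subset fun j _ => inter_subset_right))
          zero_le_two

lemma measureReal_dyadic_ge_le (hZ : IsLevyProcess Z)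
    (hp : (ℙ).real {ω | u / 2 ≤ |Z 1 ω|} < 1 / 8) {k j : ℕ} (hj : j ≤ 2 ^ k) :
    (ℙ).real {ω | 5 * u ≤ Z ((j : ℝ) / 2 ^ k) ω} ≤ 2 * (ℙ).real {ω | u / 2 ≤ |Z 1 ω|} := by
  have h_med := abs_dyadic_le_of_abs_add_sub_le (g := fun s => median ((ℙ).map (Z s)))
    (fun s r hs hr hsr => hZ.abs_median_add_sub_le hp hs hr hsr)
    (hZ.abs_median_one_le (u := u) (by linarith)) k hj
  have h_tail := (hZ.measureReal_median_tail_le (u := u) (s := j / 2 ^ k) (by linarith)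
    (by positivity) (div_le_one_of_le₀ (by exact_mod_cast hj) (by positivity))).1
  refine (measureReal_mono fun ω (hω : 5 * u ≤ Z ((j : ℝ) / 2 ^ k) ω) => ?_).trans h_tail
  rw [abs_le] at h_med
  exact Set.mem_ofPred.2 (by linarith)

lemma measureReal_exists_dyadic_lt_le (hZ : IsLevyProcess Z)
    (hp : (ℙ).real {ω | u / 2 ≤ |Z 1 ω|} < 1 / 8) (k : ℕ) :
    (ℙ).real {ω | ∃ j : ℕ, j ≤ 2 ^ k ∧ Z (j / 2 ^ k) ω < -(10 * u)}
      ≤ 2 * (ℙ).real {ω | Z 1 ω < -(5 * u)} := by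
  have h_one : ((2 ^ k : ℕ) : ℝ) / 2 ^ k = 1 := by push_cast; exact div_self (by positivity)
  have h_incr (j : ℕ) (hj : j ≤ 2 ^ k) :
      1 / 2 ≤ (ℙ).real {ω | Z 1 ω - Z ((j : ℝ) / 2 ^ k) ω < 5 * u} := by
    have h_compl : 1 - (j : ℝ) / 2 ^ k = ↑(2 ^ k - j) / 2 ^ k := by
      rw [Nat.cast_sub hj]; push_cast; field_simp
    have h_law := congrArg (fun ν : Measure ℝ => ν.real (Iio (5 * u)))
      (hZ.map_incr (s := 1) (t := (j : ℝ) / 2 ^ k) (by positivity)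
        (div_le_one_of_le₀ (by exact_mod_cast hj) (by positivity)))
    simp only [map_measureReal_apply (hZ.measurable_incr _ _) measurableSet_Iio,
      map_measureReal_apply (hZ.meas _) measurableSet_Iio, h_compl] at h_law
    have h_ge : (ℙ).real {ω | 5 * u ≤ Z (↑(2 ^ k - j) / 2 ^ k) ω}
        = 1 - (ℙ).real (Z (↑(2 ^ k - j) / 2 ^ k) ⁻¹' Iio (5 * u)) := by
      rw [← probReal_compl_eq_one_sub ((hZ.meas _) measurableSet_Iio), ← preimage_compl, compl_Iio]
      rfl
    have h_tail := hZ.measureReal_dyadic_ge_le hp (Nat.sub_le (2 ^ k) j)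
    change 1 / 2 ≤ (ℙ).real ((fun ω => Z 1 ω - Z (j / 2 ^ k) ω) ⁻¹' Iio (5 * u))
    linarith
  have := hZ.measureReal_exists_lt_le (t := fun j : ℕ => (j : ℝ) / 2 ^ k) (n := 2 ^ k)
    (a := 10 * u) (b := 5 * u) (fun i j hij => by dsimp only; gcongr) (by simp)
    (by simpa only [h_one] using h_incr)
  rwa [h_one, show 5 * u - 10 * u = -(5 * u) by ring] at this

lemma measureReal_lt_abs_iInf_le (hZ : IsLevyProcess Z) {ε : ℝ}
    (hp : (ℙ).real {ω | ε / 20 ≤ |Z 1 ω|} < 1 / 8) :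
    (ℙ).real {ω | ε < |⨅ t : Icc (0:ℝ) 1, Z t ω|} ≤ 2 * (ℙ).real {ω | ε / 2 ≤ |Z 1 ω|} := by
  set E : ℕ → Set Ω := fun k => {ω | ∃ j : ℕ, j ≤ 2 ^ k ∧ Z (j / 2 ^ k) ω < -ε}
  have hE : Monotone E := monotone_nat_of_le_succ fun k ω ⟨j, hj, hω⟩ =>
    ⟨2 * j, by rw [pow_succ]; omega, by rwa [Nat.cast_mul, pow_succ, Nat.cast_two,
      mul_comm (2 ^ k : ℝ), mul_div_mul_left _ _ two_ne_zero]⟩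
  have h_sub : {ω | ε < |⨅ t : Icc (0:ℝ) 1, Z t ω|} ⊆ ⋃ k, E k := fun ω hω => by
    rw [mem_ofPred, abs_of_nonpos (hZ.iInf_nonpos ω)] at hω
    obtain ⟨k, j, hj, hlt⟩ := exists_dyadic_lt_of_iInf_lt (fun t ht => hZ.rightCont ω t ht.1)
      (lt_neg.1 hω)
    exact mem_iUnion.2 ⟨k, j, hj, hlt⟩
  have h_dyadic (k : ℕ) : (ℙ).real (E k) ≤ 2 * (ℙ).real {ω | Z 1 ω < -(5 * (ε / 10))} := by
    have := hZ.measureReal_exists_dyadic_lt_le (u := ε / 10)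
      (by rwa [div_div, show (10:ℝ) * 2 = 20 by norm_num]) k
    rwa [mul_div_cancel₀ ε (by norm_num : (10:ℝ) ≠ 0)] at this
  calc (ℙ).real {ω | ε < |⨅ t : Icc (0:ℝ) 1, Z t ω|}
      ≤ (ℙ).real (⋃ k, E k) := measureReal_mono h_sub
    _ ≤ 2 * (ℙ).real {ω | Z 1 ω < -(5 * (ε / 10))} :=
        le_of_tendsto' (tendsto_measureReal_iUnion_atTop hE) h_dyadic
    _ ≤ 2 * (ℙ).real {ω | ε / 2 ≤ |Z 1 ω|} :=
        mul_le_mul_of_nonneg_left (measureReal_mono fun ω (hω : Z 1 ω < -(5 * (ε / 10))) =>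
          show ε / 2 ≤ |Z 1 ω| by linarith [neg_le_abs (Z 1 ω)]) zero_le_two

end IsLevyProcess

/-- If `Δ a * X a 1 → 0` almost surely as `a ↓ 0`, then
`Δ a * inf_{t∈[0,1]} X a t → 0` in probability as `a ↓ 0`. -/
theorem levy_inf_tendsto_zero_in_probability
    {Ω : Type*} [MeasureSpace Ω] [IsProbabilityMeasure (ℙ : Measure Ω)]
    (X : ℝ → ℝ → Ω → ℝ) (Δ : ℝ → ℝ)
    (hLevy : ∀ a > 0, IsLevyProcess (X a))
    (hΔpos : ∀ a > 0, 0 < Δ a)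
    (hΔ : ∀ᵐ ω ∂ℙ, Tendsto (fun a => Δ a * X a 1 ω) (𝓝[>] (0:ℝ)) (𝓝 0)) :
    ∀ ε > 0,
      Tendsto (fun a => ℙ {ω | ε < |Δ a * ⨅ t : Set.Icc (0:ℝ) 1, X a t ω|})
        (𝓝[>] (0:ℝ)) (𝓝 0) := by
  intro ε hε
  have h_meas : TendstoInMeasure ℙ (fun a ω => Δ a * X a 1 ω) (𝓝[>] (0:ℝ)) 0 :=
    tendstoInMeasure_of_tendsto_ae_of_isCountablyGenerated (eventually_nhdsWithin_of_forall
      fun a ha => (((hLevy a ha).meas 1).const_mul (Δ a)).aestronglyMeasurable) hΔ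
  have h_prob : ∀ v > 0,
      Tendsto (fun a => (ℙ).real {ω | v ≤ |Δ a * X a 1 ω|}) (𝓝[>] (0:ℝ)) (𝓝 0) := by
    simpa only [Pi.zero_apply, sub_zero, Real.norm_eq_abs] using
      tendstoInMeasure_iff_measureReal_norm.1 h_meas
  have h_bound : ∀ᶠ a in 𝓝[>] 0, (ℙ).real {ω | ε < |Δ a * ⨅ t : Icc (0:ℝ) 1, X a t ω|}
      ≤ 2 * (ℙ).real {ω | ε / 2 ≤ |Δ a * X a 1 ω|} := by
    filter_upwards [self_mem_nhdsWithin,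
      (h_prob (ε / 20) (by positivity)).eventually_lt_const (by norm_num : (0:ℝ) < 1 / 8)]
      with a ha hp
    simp_rw [Real.mul_iInf_of_nonneg (hΔpos a ha).le]
    exact ((hLevy a ha).const_mul (Δ a)).measureReal_lt_abs_iInf_le hp
  rw [← ENNReal.tendsto_toReal_zero_iff fun _ => measure_ne_top _ _]
  refine tendsto_of_tendsto_of_tendsto_of_le_of_le' tendsto_const_nhds ?_
    (Eventually.of_forall fun _ => ENNReal.toReal_nonneg) h_bound
  simpa using (h_prob (ε / 2) (by positivity)).const_mul 2
end
end

section
/- Let α ∈ (1,2], and let X = (X_t)_{t≥0} be a real-valued stochastic process with càdlàg sample paths and X_0 = 0. Suppose there exist a constant C > 0 and a function V : (0,∞) → (0,∞) such that P(sup_{s≤t} X_s ≥ x) ≤ C · t · V(x)/x² for all t > 0 and x > 0, and a constant K > 0 such that V(λx) ≤ K · λ^{2−α} · V(x) for all λ ≥ 1 and x > 0. Then for all a > 0 and S > 0: P(sup_{t≥S} (X_t − a t) ≥ 0) ≤ (2CK / (1 − 2^{1−α})) · S · V(aS)/(aS)². -/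
/-!
If the path crosses the line `a t` after time `S`, it does so in some dyadic block
`[2^k S, 2^(k+1) S]`, where it must exceed roughly `2^k a S`. The maximal inequality bounds that
event by `C 2^(k+1) S V(2^k a S) / (2^k a S)^2`, and the growth condition on `V` turns this into
`q^k` times the bound for `k = 0`, with `q = 2^(1-α) < 1`; summing the geometric series gives the
constant. Since the supremum need not be attained, the levels are lowered to `2^k r a S` with
`r < 1` (but kept at `a S` for `k = 0`, as the growth condition only scales upwards), and `r → 1`
at the end.
-/

open MeasureTheory ProbabilityTheory Filter Topology Set

noncomputable section

theorem exists_eventually_le_of_cadlag {f : ℝ → ℝ}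
    (hrc : ∀ t : ℝ, 0 ≤ t → ContinuousWithinAt f (Ici t) t)
    (hll : ∀ t : ℝ, 0 < t → ∃ l, Tendsto f (𝓝[<] t) (𝓝 l)) {t : ℝ} (ht : 0 ≤ t) :
    ∃ c, ∀ᶠ u in 𝓝[Ici 0] t, f u ≤ c := by
  have hright : ∀ᶠ u in 𝓝[≥] t, f u ≤ f t + 1 :=
    (hrc t ht).eventually (eventually_le_nhds (lt_add_one _))
  rcases ht.eq_or_lt with rfl | ht
  · exact ⟨_, hright⟩
  obtain ⟨l, hl⟩ := hll t ht
  have hleft : ∀ᶠ u in 𝓝[<] t, f u ≤ l + 1 := hl.eventually (eventually_le_nhds (lt_add_one _))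
  refine ⟨max (l + 1) (f t + 1), nhdsWithin_le_nhds ?_⟩
  rw [← nhdsLT_sup_nhdsGE]
  exact eventually_sup.2 ⟨hleft.mono fun u hu => le_max_of_le_left hu,
    hright.mono fun u hu => le_max_of_le_right hu⟩

theorem bddAbove_image_Icc_of_cadlag {f : ℝ → ℝ}
    (hrc : ∀ t : ℝ, 0 ≤ t → ContinuousWithinAt f (Ici t) t)
    (hll : ∀ t : ℝ, 0 < t → ∃ l, Tendsto f (𝓝[<] t) (𝓝 l)) (T : ℝ) :
    BddAbove (f '' Icc 0 T) := by
  refine isCompact_Icc.induction_on (p := fun s => BddAbove (f '' s)) (by simp)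
    (fun s t hst ht => ht.mono (image_mono hst))
    (fun s t hs ht => by rw [image_union]; exact hs.union ht) fun t ht => ?_
  obtain ⟨c, hc⟩ := exists_eventually_le_of_cadlag hrc hll ht.1
  exact ⟨{u | f u ≤ c}, nhdsWithin_mono _ Icc_subset_Ici_self hc,
    ⟨c, by rintro _ ⟨u, hu, rfl⟩; exact hu⟩⟩

theorem exists_dyadic_level_le_iSup_Icc {f : ℝ → ℝ}
    (hf : ∀ T, BddAbove (f '' Icc 0 T)) {a S r : ℝ} (ha : 0 < a) (hS : 0 < S) (hr : r ∈ Ioo 0 1)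
    (h : 0 ≤ ⨆ t : Ici S, (f t - a * t)) :
    ∃ k : ℕ, max 1 (2 ^ k * r) * (a * S) ≤ ⨆ s : Icc (0:ℝ) (2 ^ (k + 1) * S), f s := by
  by_contra! hlt
  set M : ℕ → ℝ := fun k => ⨆ s : Icc (0:ℝ) (2 ^ (k + 1) * S), f s
  have hM0 : M 0 < a * S := by simpa [max_eq_left hr.2.le] using hlt 0
  -- a gap below the line, uniform in `t`: from `M 0 < a S` on the first block, from `r < 1` after
  set δ := min (a * S - M 0) ((1 - r) * (a * S))
  have hδ : 0 < δ := lt_min (by linarith) (mul_pos (by linarith [hr.2]) (mul_pos ha hS))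
  suffices ∀ t : Ici S, f t - a * t ≤ -δ by linarith [ciSup_le this]
  rintro ⟨t, ht⟩
  obtain ⟨k, hk, hk'⟩ := exists_nat_pow_near ((one_le_div hS).2 ht) one_lt_two
  rw [le_div_iff₀ hS] at hk
  rw [div_lt_iff₀ hS] at hk'
  have hft : f t ≤ M k := by
    have hbdd := hf (2 ^ (k + 1) * S)
    rw [image_eq_range] at hbdd
    exact le_ciSup hbdd ⟨t, hS.le.trans ht, hk'.le⟩
  rcases k with _ | k
  · have : a * S ≤ a * t := by gcongr; exact ht
    linarith [min_le_left (a * S - M 0) ((1 - r) * (a * S))]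
  · have h2 : (2:ℝ) ≤ 2 ^ (k + 1) := le_self_pow₀ one_le_two (by omega)
    have hmax : max 1 (2 ^ (k + 1) * r) ≤ 2 ^ (k + 1) - (1 - r) :=
      max_le (by linarith [hr.1]) (by nlinarith [hr.2])
    have : max 1 (2 ^ (k + 1) * r) * (a * S) ≤ (2 ^ (k + 1) - (1 - r)) * (a * S) := by gcongr
    have : 2 ^ (k + 1) * S * a ≤ t * a := by gcongr
    linarith [hlt (k + 1), min_le_right (a * S - M 0) ((1 - r) * (a * S))]

theorem two_pow_mul_rpow_neg (α : ℝ) (k : ℕ) :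
    (2:ℝ) ^ k * ((2:ℝ) ^ k) ^ (-α) = ((2:ℝ) ^ (1 - α)) ^ k := by
  rw [← Real.rpow_natCast, ← Real.rpow_natCast, ← Real.rpow_mul two_pos.le,
    ← Real.rpow_add two_pos, ← Real.rpow_mul two_pos.le]
  ring_nf

theorem div_sq_le_of_growth {V : ℝ → ℝ} {K α : ℝ}
    (hVK : ∀ l : ℝ, 1 ≤ l → ∀ x > 0, V (l * x) ≤ K * l ^ (2 - α) * V x)
    {l x : ℝ} (hl : 1 ≤ l) (hx : 0 < x) :
    V (l * x) / (l * x) ^ 2 ≤ K * l ^ (-α) * (V x / x ^ 2) := by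
  have hl0 : 0 < l := one_pos.trans_le hl
  have hpow : l ^ (2 - α) = l ^ 2 * l ^ (-α) := by
    rw [sub_eq_add_neg, Real.rpow_add hl0, Real.rpow_two]
  calc V (l * x) / (l * x) ^ 2 ≤ K * l ^ (2 - α) * V x / (l * x) ^ 2 := by
        gcongr; exact hVK l hl x hx
    _ = K * l ^ (-α) * (V x / x ^ 2) := by
        rw [hpow]; field_simp

theorem dyadic_term_le {V : ℝ → ℝ} {K α : ℝ}
    (hVK : ∀ l : ℝ, 1 ≤ l → ∀ x > 0, V (l * x) ≤ K * l ^ (2 - α) * V x)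
    (hα : 0 ≤ α) (hK : 0 ≤ K) {C S x r : ℝ} (hC : 0 ≤ C) (hS : 0 ≤ S) (hx : 0 < x)
    (hVx : 0 ≤ V x) (hr : 0 < r) (k : ℕ) :
    C * (2 ^ (k + 1) * S) * V (max 1 (2 ^ k * r) * x) / (max 1 (2 ^ k * r) * x) ^ 2 ≤
      2 * C * K * S * (V x / x ^ 2) * r ^ (-α) * ((2:ℝ) ^ (1 - α)) ^ k := by
  have hkr : 0 < 2 ^ k * r := by positivity
  calc C * (2 ^ (k + 1) * S) * V (max 1 (2 ^ k * r) * x) / (max 1 (2 ^ k * r) * x) ^ 2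
      ≤ C * (2 ^ (k + 1) * S) * (K * (max 1 (2 ^ k * r)) ^ (-α) * (V x / x ^ 2)) := by
        rw [mul_div_assoc]
        gcongr
        exact div_sq_le_of_growth hVK (le_max_left _ _) hx
    _ ≤ C * (2 ^ (k + 1) * S) * (K * (2 ^ k * r) ^ (-α) * (V x / x ^ 2)) := by
        gcongr C * (2 ^ (k + 1) * S) * (K * ?_ * (V x / x ^ 2))
        exact Real.rpow_le_rpow_of_nonpos hkr (le_max_right _ _) (neg_nonpos.2 hα)
    _ = 2 * C * K * S * (V x / x ^ 2) * r ^ (-α) * (2 ^ k * ((2:ℝ) ^ k) ^ (-α)) := by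
        rw [Real.mul_rpow (by positivity) hr.le]; ring
    _ = _ := by rw [two_pow_mul_rpow_neg]

theorem tsum_ofReal_mul_geometric {c q : ℝ} (hc : 0 ≤ c) (hq0 : 0 ≤ q) (hq1 : q < 1) :
    ∑' k : ℕ, ENNReal.ofReal (c * q ^ k) = ENNReal.ofReal (c / (1 - q)) := by
  rw [← ENNReal.ofReal_tsum_of_nonneg (fun k => by positivity)
    ((summable_geometric_of_lt_one hq0 hq1).mul_left c), tsum_mul_left,
    tsum_geometric_of_lt_one hq0 hq1, div_eq_mul_inv]

theorem le_ofReal_of_forall_le_ofReal_mul_rpow {μ : ENNReal} {c α : ℝ}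
    (h : ∀ r ∈ Ioo (0:ℝ) 1, μ ≤ ENNReal.ofReal (c * r ^ (-α))) : μ ≤ ENNReal.ofReal c := by
  have hlim :
      Tendsto (fun r : ℝ => ENNReal.ofReal (c * r ^ (-α))) (𝓝[<] 1) (𝓝 (ENNReal.ofReal c)) := by
    have : ContinuousAt (fun r : ℝ => ENNReal.ofReal (c * r ^ (-α))) 1 :=
      ENNReal.continuous_ofReal.continuousAt.comp
        (continuousAt_const.mul (Real.continuousAt_rpow_const _ _ (Or.inl one_ne_zero)))
    simpa using this.tendsto.mono_left nhdsWithin_le_nhds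
  exact ge_of_tendsto hlim (eventually_of_mem (Ioo_mem_nhdsLT zero_lt_one) h)

theorem dyadic_tail_bound_general
    {Ω : Type*} [MeasureSpace Ω]
    (α : ℝ) (hα : α ∈ Set.Ioc (1:ℝ) 2)
    (X : ℝ → Ω → ℝ)
    (hrc : ∀ ω, ∀ t : ℝ, 0 ≤ t → ContinuousWithinAt (fun u => X u ω) (Set.Ici t) t)
    (hll : ∀ ω, ∀ t : ℝ, 0 < t → ∃ l, Tendsto (fun u => X u ω) (𝓝[<] t) (𝓝 l))
    (C : ℝ) (hC : 0 < C)
    (V : ℝ → ℝ) (hVpos : ∀ x > 0, 0 < V x)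
    (hbound : ∀ t > 0, ∀ x > 0,
      ℙ {ω | x ≤ ⨆ s : Set.Icc (0:ℝ) t, X s ω} ≤ ENNReal.ofReal (C * t * V x / x ^ 2))
    (K : ℝ) (hK : 0 < K)
    (hVK : ∀ l : ℝ, 1 ≤ l → ∀ x > 0, V (l * x) ≤ K * l ^ (2 - α) * V x) :
    ∀ a > 0, ∀ S > 0,
      ℙ {ω | (0:ℝ) ≤ ⨆ t : Set.Ici S, (X t ω - a * (t : ℝ))} ≤
        ENNReal.ofReal (2 * C * K / (1 - 2 ^ (1 - α)) * S * V (a * S) / (a * S) ^ 2) := by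
  intro a ha S hS
  have haS : 0 < a * S := mul_pos ha hS
  have hq : (2:ℝ) ^ (1 - α) < 1 :=
    Real.rpow_lt_one_of_one_lt_of_neg one_lt_two (by linarith [hα.1])
  set B := 2 * C * K * S * (V (a * S) / (a * S) ^ 2)
  have hB : 0 ≤ B := by have := hVpos _ haS; positivity
  refine le_ofReal_of_forall_le_ofReal_mul_rpow (α := α) fun r hr => ?_
  set E : ℕ → Set Ω :=
    fun k => {ω | max 1 (2 ^ k * r) * (a * S) ≤ ⨆ s : Icc (0:ℝ) (2 ^ (k + 1) * S), X s ω}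
  calc ℙ {ω | (0:ℝ) ≤ ⨆ t : Set.Ici S, (X t ω - a * (t : ℝ))}
      ≤ ℙ (⋃ k, E k) :=
        measure_mono fun ω hω => mem_iUnion.2 <| exists_dyadic_level_le_iSup_Icc
          (bddAbove_image_Icc_of_cadlag (hrc ω) (hll ω)) ha hS hr hω
    _ ≤ ∑' k, ℙ (E k) := measure_iUnion_le E
    _ ≤ ∑' k : ℕ, ENNReal.ofReal (B * r ^ (-α) * ((2:ℝ) ^ (1 - α)) ^ k) := by
        refine ENNReal.tsum_le_tsum fun k => (hbound _ (by positivity) _ (by positivity)).trans ?_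
        exact ENNReal.ofReal_le_ofReal <| dyadic_term_le hVK (by linarith [hα.1]) hK.le hC.le
          hS.le haS (hVpos _ haS).le hr.1 k
    _ = ENNReal.ofReal (B * r ^ (-α) / (1 - 2 ^ (1 - α))) :=
        tsum_ofReal_mul_geometric (mul_nonneg hB (Real.rpow_nonneg hr.1.le _)) (by positivity) hq
    _ = _ := by congr 1; ring

/-- Dyadic tail bound: if a càdlàg process `X` with `X 0 = 0` satisfies the
maximal inequality `P(sup_{s≤t} X_s ≥ x) ≤ C t V(x)/x²` and `V(λx) ≤ K λ^(2-α) V(x)` for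
`λ ≥ 1`, `α ∈ (1,2]`, then for all `a, S > 0`,
`P(sup_{t≥S} (X_t - a t) ≥ 0) ≤ (2CK/(1 - 2^(1-α))) S V(aS)/(aS)²`. -/
theorem dyadic_tail_bound
    {Ω : Type*} [MeasureSpace Ω] [IsProbabilityMeasure (ℙ : Measure Ω)]
    (α : ℝ) (hα : α ∈ Set.Ioc (1:ℝ) 2)
    (X : ℝ → Ω → ℝ)
    (hX0 : ∀ ω, X 0 ω = 0)
    (hrc : ∀ ω, ∀ t : ℝ, 0 ≤ t → ContinuousWithinAt (fun u => X u ω) (Set.Ici t) t)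
    (hll : ∀ ω, ∀ t : ℝ, 0 < t → ∃ l, Tendsto (fun u => X u ω) (𝓝[<] t) (𝓝 l))
    (C : ℝ) (hC : 0 < C)
    (V : ℝ → ℝ) (hVpos : ∀ x > 0, 0 < V x)
    (hbound : ∀ t > 0, ∀ x > 0,
      ℙ {ω | x ≤ ⨆ s : Set.Icc (0:ℝ) t, X s ω} ≤ ENNReal.ofReal (C * t * V x / x ^ 2))
    (K : ℝ) (hK : 0 < K)
    (hVK : ∀ l : ℝ, 1 ≤ l → ∀ x > 0, V (l * x) ≤ K * l ^ (2 - α) * V x) :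
    ∀ a > 0, ∀ S > 0,
      ℙ {ω | (0:ℝ) ≤ ⨆ t : Set.Ici S, (X t ω - a * (t : ℝ))} ≤
        ENNReal.ofReal (2 * C * K / (1 - 2 ^ (1 - α)) * S * V (a * S) / (a * S) ^ 2) :=
  dyadic_tail_bound_general α hα X hrc hll C hC V hVpos hbound K hK hVK
end
end
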